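/- If the mixed strategy profile x = (x^1,…,x^n) is a Nash equilibrium, then there exist reals ū^i, u^i_s, r^i_s, f^i_s and b^i_s ∈ {0,1} (for all players i and s ∈ S_i) satisfying the MIMLP2 constraints — u^i_s = u_i(s, x), ū^i ≥ u^i_s, r^i_s = ū^i − u^i_s, r^i_s ≥ 0, x^i(s) ≤ 1 − b^i_s, f^i_s ≥ r^i_s, f^i_s ≥ U^i b^i_s — whose objective value ∑_{i=1}^n ∑_{s∈S_i} (f^i_s − U^i b^i_s) equals 0. -/

import Mathlib

/-! On the support of a Nash equilibrium every pure strategy earns the equilibrium payoff: the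
equilibrium payoff is the `x^i`-average of the pure payoffs, none of which exceeds it. Off the
support the regret `r^i_s` is at most `U^i`, both payoffs being averages of payoffs of player `i`.
So with `b^i_s = 1` exactly off the support and `f^i_s = max (r^i_s, U^i b^i_s)`, every summand
of the objective vanishes. -/

open Finset

/-- Expected payoff `U_i(x)` of player `i` under the mixed strategy profile `x`. -/
def expPayoff {n : ℕ} {S : Fin n → Type} [∀ i, Fintype (S i)]
    (A : Fin n → (∀ j, S j) → ℝ) (x : ∀ i, S i → ℝ) (i : Fin n) : ℝ :=
  ∑ t : ∀ j, S j, A i t * ∏ j, x j (t j)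

/-- Expected payoff `u_i(s, x)` of player `i` playing the pure strategy `s` while the
other players play their mixed strategies from `x`: summing over full pure profiles `t`
with `t i = s` is the same as summing over tuples `ŝ` of pure strategies of the others. -/
def purePayoff {n : ℕ} {S : Fin n → Type} [∀ i, Fintype (S i)] [∀ i, DecidableEq (S i)]
    (A : Fin n → (∀ j, S j) → ℝ) (x : ∀ i, S i → ℝ) (i : Fin n) (s : S i) : ℝ :=
  ∑ t : ∀ j, S j, if t i = s then A i t * ∏ j ∈ Finset.univ.erase i, x j (t j) else 0

/-- `U^i`: the maximum difference of any two payoffs of player `i`. -/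
noncomputable def payoffRange {n : ℕ} {S : Fin n → Type} [∀ i, Fintype (S i)]
    [∀ i, Nonempty (S i)] (A : Fin n → (∀ j, S j) → ℝ) (i : Fin n) : ℝ :=
  Finset.univ.sup' Finset.univ_nonempty (A i) - Finset.univ.inf' Finset.univ_nonempty (A i)

section WeightedAverage

variable {ι : Type*} [Fintype ι]

theorem prod_mem_stdSimplex [DecidableEq ι] {κ : ι → Type*} [∀ i, Fintype (κ i)]
    {x : ∀ i, κ i → ℝ} (hx : ∀ i, x i ∈ stdSimplex ℝ (κ i)) :
    (fun t : ∀ i, κ i => ∏ i, x i (t i)) ∈ stdSimplex ℝ (∀ i, κ i) :=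
  ⟨fun t => prod_nonneg fun i _ => (hx i).1 (t i), by
    rw [← Fintype.prod_sum]
    exact prod_eq_one fun i _ => (hx i).2⟩

theorem sum_mul_le_sup'_of_mem_stdSimplex [Nonempty ι] (f : ι → ℝ) {w : ι → ℝ}
    (hw : w ∈ stdSimplex ℝ ι) : ∑ t, f t * w t ≤ univ.sup' univ_nonempty f :=
  calc ∑ t, f t * w t ≤ ∑ t, univ.sup' univ_nonempty f * w t :=
        sum_le_sum fun t _ => mul_le_mul_of_nonneg_right (le_sup' f (mem_univ t)) (hw.1 t)
    _ = univ.sup' univ_nonempty f := by rw [← mul_sum, hw.2, mul_one]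

theorem inf'_le_sum_mul_of_mem_stdSimplex [Nonempty ι] (f : ι → ℝ) {w : ι → ℝ}
    (hw : w ∈ stdSimplex ℝ ι) : univ.inf' univ_nonempty f ≤ ∑ t, f t * w t :=
  calc univ.inf' univ_nonempty f = ∑ t, univ.inf' univ_nonempty f * w t := by
        rw [← mul_sum, hw.2, mul_one]
    _ ≤ ∑ t, f t * w t :=
        sum_le_sum fun t _ => mul_le_mul_of_nonneg_right (inf'_le f (mem_univ t)) (hw.1 t)

theorem eq_of_sum_mul_eq_of_le {w f : ι → ℝ} {M : ℝ} (hw : w ∈ stdSimplex ℝ ι)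
    (hle : ∀ t, f t ≤ M) (hsum : ∑ t, w t * f t = M) {t : ι} (ht : w t ≠ 0) : f t = M := by
  have hgap : ∑ t, w t * (M - f t) = 0 := by
    simp only [mul_sub, sum_sub_distrib, ← sum_mul, hw.2, one_mul, hsum, sub_self]
  have hterm := (sum_eq_zero_iff_of_nonneg fun t _ =>
    mul_nonneg (hw.1 t) (sub_nonneg.2 (hle t))).1 hgap t (mem_univ t)
  linarith [(mul_eq_zero.1 hterm).resolve_left ht]

end WeightedAverage

section Payoffs

variable {n : ℕ} {S : Fin n → Type} [∀ i, Fintype (S i)]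
  (A : Fin n → (∀ j, S j) → ℝ) {x : ∀ i, S i → ℝ}

theorem update_mem_stdSimplex [∀ i, DecidableEq (S i)] (hx : ∀ j, x j ∈ stdSimplex ℝ (S j))
    {i : Fin n} {y : S i → ℝ} (hy : y ∈ stdSimplex ℝ (S i)) :
    ∀ j, Function.update x i y j ∈ stdSimplex ℝ (S j) :=
  (Function.forall_update_iff x fun j z => z ∈ stdSimplex ℝ (S j)).2 ⟨hy, fun j _ => hx j⟩

theorem expPayoff_mem_Icc [∀ i, Nonempty (S i)] (hx : ∀ j, x j ∈ stdSimplex ℝ (S j))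
    (i : Fin n) :
    expPayoff A x i ∈ Set.Icc (univ.inf' univ_nonempty (A i)) (univ.sup' univ_nonempty (A i)) :=
  ⟨inf'_le_sum_mul_of_mem_stdSimplex _ (prod_mem_stdSimplex hx),
    sum_mul_le_sup'_of_mem_stdSimplex _ (prod_mem_stdSimplex hx)⟩

theorem expPayoff_sub_le_payoffRange [∀ i, Nonempty (S i)] {x y : ∀ i, S i → ℝ}
    (hx : ∀ j, x j ∈ stdSimplex ℝ (S j)) (hy : ∀ j, y j ∈ stdSimplex ℝ (S j))
    (i : Fin n) :
    expPayoff A x i - expPayoff A y i ≤ payoffRange A i := by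
  have hx' := expPayoff_mem_Icc A hx i
  have hy' := expPayoff_mem_Icc A hy i
  unfold payoffRange
  linarith [hx'.2, hy'.1]

variable [∀ i, DecidableEq (S i)]

theorem purePayoff_eq_expPayoff_update (x : ∀ i, S i → ℝ) (i : Fin n) (s : S i) :
    purePayoff A x i s = expPayoff A (Function.update x i (Pi.single s 1)) i := by
  refine sum_congr rfl fun t _ => ?_
  have hothers : ∏ j ∈ univ.erase i, Function.update x i (Pi.single s 1) j (t j)
      = ∏ j ∈ univ.erase i, x j (t j) :=
    prod_congr rfl fun j hj => by rw [Function.update_of_ne (ne_of_mem_erase hj)]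
  rw [← mul_prod_erase univ _ (mem_univ i), hothers, Function.update_self, Pi.single_apply]
  split_ifs <;> ring

theorem expPayoff_eq_sum_mul_purePayoff (x : ∀ i, S i → ℝ) (i : Fin n) :
    expPayoff A x i = ∑ s, x i s * purePayoff A x i s := by
  simp only [purePayoff, mul_sum, mul_ite, mul_zero]
  rw [sum_comm]
  refine sum_congr rfl fun t _ => ?_
  rw [sum_ite_eq, if_pos (mem_univ _), ← mul_prod_erase univ _ (mem_univ i)]
  ring

end Payoffs

section Nash

variable {n : ℕ} {S : Fin n → Type} [∀ i, Fintype (S i)] [∀ i, DecidableEq (S i)]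
  {A : Fin n → (∀ j, S j) → ℝ} {x : ∀ i, S i → ℝ}

def IsNash (A : Fin n → (∀ j, S j) → ℝ) (x : ∀ i, S i → ℝ) : Prop :=
  ∀ (i : Fin n) (y : S i → ℝ), y ∈ stdSimplex ℝ (S i) →
    expPayoff A (Function.update x i y) i ≤ expPayoff A x i

theorem IsNash.purePayoff_le (h : IsNash A x) (i : Fin n) (s : S i) :
    purePayoff A x i s ≤ expPayoff A x i := by
  rw [purePayoff_eq_expPayoff_update]
  exact h i _ (single_mem_stdSimplex ℝ s)

theorem IsNash.purePayoff_eq_of_ne_zero (h : IsNash A x) (hx : ∀ j, x j ∈ stdSimplex ℝ (S j))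
    {i : Fin n} {s : S i} (hs : x i s ≠ 0) : purePayoff A x i s = expPayoff A x i :=
  eq_of_sum_mul_eq_of_le (hx i) (h.purePayoff_le i)
    (expPayoff_eq_sum_mul_purePayoff A x i).symm hs

end Nash

theorem nash_gives_mimlp2_optimal_general
    (n : ℕ) (S : Fin n → Type)
    [∀ i, Fintype (S i)] [∀ i, Nonempty (S i)] [∀ i, DecidableEq (S i)]
    (A : Fin n → (∀ j, S j) → ℝ)
    (x : ∀ i, S i → ℝ)
    (hx0 : ∀ i s, 0 ≤ x i s) (hx1 : ∀ i, ∑ s, x i s = 1)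
    (hNash : ∀ (i : Fin n) (y : S i → ℝ), (∀ s, 0 ≤ y s) → ∑ s, y s = 1 →
      expPayoff A (Function.update x i y) i ≤ expPayoff A x i)
    :
    ∃ (ubar : Fin n → ℝ) (u r f b : ∀ i, S i → ℝ),
      (∀ (i : Fin n) (s : S i),
        (b i s = 0 ∨ b i s = 1) ∧
        u i s = purePayoff A x i s ∧
        u i s ≤ ubar i ∧
        r i s = ubar i - u i s ∧
        0 ≤ r i s ∧
        x i s ≤ 1 - b i s ∧
        r i s ≤ f i s ∧
        payoffRange A i * b i s ≤ f i s) ∧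
      ∑ i, ∑ s, (f i s - payoffRange A i * b i s) = 0 := by
  have hx : ∀ j, x j ∈ stdSimplex ℝ (S j) := fun j => ⟨hx0 j, hx1 j⟩
  have hEq : IsNash A x := fun i y hy => hNash i y hy.1 hy.2
  have hregret (i : Fin n) (s : S i) :
      expPayoff A x i - purePayoff A x i s ≤ payoffRange A i := by
    rw [purePayoff_eq_expPayoff_update]
    exact expPayoff_sub_le_payoffRange A hx
      (update_mem_stdSimplex hx (single_mem_stdSimplex ℝ s)) i
  let r : ∀ i, S i → ℝ := fun i s => expPayoff A x i - purePayoff A x i s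
  let b : ∀ i, S i → ℝ := fun i s => if x i s = 0 then 1 else 0
  refine ⟨expPayoff A x, purePayoff A x, r, fun i s => max (r i s) (payoffRange A i * b i s), b,
    fun i s => ⟨?_, rfl, hEq.purePayoff_le i s, rfl, sub_nonneg.2 (hEq.purePayoff_le i s), ?_,
      le_max_left _ _, le_max_right _ _⟩, ?_⟩
  · by_cases h : x i s = 0 <;> simp [b, h]
  · by_cases h : x i s = 0
    · simp [b, h]
    · simpa [b, h] using (mem_Icc_of_mem_stdSimplex (hx i) s).2
  · refine sum_eq_zero fun i _ => sum_eq_zero fun s _ => ?_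
    by_cases h : x i s = 0
    · simp [r, b, h, max_eq_right (hregret i s)]
    · simp [r, b, h, hEq.purePayoff_eq_of_ne_zero hx h]

/-- If the mixed strategy profile `x` is a Nash equilibrium, then there
exist `ū^i`, `u^i_s`, `r^i_s`, `f^i_s` and binary `b^i_s` satisfying the MIMLP2 constraints
whose objective value `∑ᵢ ∑_{s ∈ S_i} (f^i_s − U^i b^i_s)` equals `0`. -/
theorem nash_gives_mimlp2_optimal
    (n : ℕ) (hn : 2 ≤ n) (S : Fin n → Type)
    [∀ i, Fintype (S i)] [∀ i, Nonempty (S i)] [∀ i, DecidableEq (S i)]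
    (A : Fin n → (∀ j, S j) → ℝ)
    (x : ∀ i, S i → ℝ)
    (hx0 : ∀ i s, 0 ≤ x i s) (hx1 : ∀ i, ∑ s, x i s = 1)
    (hNash : ∀ (i : Fin n) (y : S i → ℝ), (∀ s, 0 ≤ y s) → ∑ s, y s = 1 →
      expPayoff A (Function.update x i y) i ≤ expPayoff A x i)
    :
    ∃ (ubar : Fin n → ℝ) (u r f b : ∀ i, S i → ℝ),
      (∀ (i : Fin n) (s : S i),
        (b i s = 0 ∨ b i s = 1) ∧
        u i s = purePayoff A x i s ∧
        u i s ≤ ubar i ∧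
        r i s = ubar i - u i s ∧
        0 ≤ r i s ∧
        x i s ≤ 1 - b i s ∧
        r i s ≤ f i s ∧
        payoffRange A i * b i s ≤ f i s) ∧
      ∑ i, ∑ s, (f i s - payoffRange A i * b i s) = 0 :=
  nash_gives_mimlp2_optimal_general n S A x hx0 hx1 hNash
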